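/- Let μ₀ be a Borel probability measure on ℝ whose distribution function F₀ is continuous and strictly increasing on ℝ (hence invertible), let α∈(0,1), and for ε>0 with ε < min(α, 1-α) let 𝓛_ε = {μ : sup_{x∈ℝ}|F_μ(x) − F₀(x)| ≤ ε} be the Kolmogorov ε-ball around μ₀. Then sup_{μ∈𝓛_ε} VaR_α(μ) = −F₀⁻¹(α−ε) and inf_{μ∈𝓛_ε} VaR_α(μ) = −F₀⁻¹(α+ε). Consequently, if F₀ has a density f₀ that is continuous and strictly positive at F₀⁻¹(α), then the local measure of model risk satisfies LM = lim_{ε→0} (sup_{μ∈𝓛_ε}VaR_α(μ) − VaR_α(μ₀)) / (sup_{μ∈𝓛_ε}VaR_α(μ) − inf_{μ∈𝓛_ε}VaR_α(μ)) = 1/2. -/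

import Mathlib

/-!
In the Kolmogorov `ε`-ball every distribution function satisfies `F₀ - ε ≤ F_μ ≤ F₀ + ε`, so
`{F_μ ≥ α}` is squeezed between `{F₀ ≥ α + ε}` and `{F₀ ≥ α - ε}` and
`q_α(μ) ∈ [q_{α-ε}(μ₀), q_{α+ε}(μ₀)]`. Conversely every `c` in this interval is the `α`-quantile
of the distribution function equal to `F₀ - ε` left of `c` and to `F₀ + ε` from `c` on (clamped
to `[0, 1]`), which lies in the ball. So the Values-at-Risk over the ball fill exactly
`[-q_{α+ε}(μ₀), -q_{α-ε}(μ₀)]`. Finally `β ↦ q_β(μ₀)`, the inverse of `F₀`, is differentiable at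
`α` with derivative `1 / f₀(q_α(μ₀)) ≠ 0`, so the backward difference `q_α(μ₀) - q_{α-ε}(μ₀)` is
asymptotically half of the central difference `q_{α+ε}(μ₀) - q_{α-ε}(μ₀)`.
-/

open MeasureTheory Set Filter
open ProbabilityTheory Topology

/-- The distribution function of a measure: `F_μ(x) = μ((-∞, x])`. -/
noncomputable def distFun (μ : Measure ℝ) (x : ℝ) : ℝ := (μ (Iic x)).toReal

/-- The lower quantile of order `α`: `q_α(μ) = inf {x : F_μ(x) ≥ α}`.
When the distribution function of `μ` is continuous and strictly increasing,
this is its inverse evaluated at `α`. -/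
noncomputable def lowerQuantile (μ : Measure ℝ) (α : ℝ) : ℝ :=
  sInf {x : ℝ | α ≤ distFun μ x}

/-- The Value-at-Risk of order `α`: `VaR_α(μ) = -q_α(μ)`. -/
noncomputable def VaR (μ : Measure ℝ) (α : ℝ) : ℝ := - lowerQuantile μ α

def kolmogorovBall (μ₀ : Measure ℝ) (ε : ℝ) : Set (Measure ℝ) :=
  {μ | IsProbabilityMeasure μ ∧ ∀ x, |distFun μ x - distFun μ₀ x| ≤ ε}

lemma lowerQuantile_eq_of_le_distFun_iff {μ : Measure ℝ} {β c : ℝ}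
    (h : ∀ x, β ≤ distFun μ x ↔ c ≤ x) : lowerQuantile μ β = c := by
  rw [lowerQuantile, show {x | β ≤ distFun μ x} = Ici c from Set.ext h, csInf_Ici]

section ProbabilityMeasure

variable (μ : Measure ℝ) [IsProbabilityMeasure μ]

lemma distFun_eq_cdf : distFun μ = cdf μ := funext fun x => (cdf_eq_real μ x).symm

variable {μ} {β : ℝ}

lemma bddBelow_setOf_le_distFun (hβ : 0 < β) : BddBelow {x | β ≤ distFun μ x} := by
  obtain ⟨a, ha⟩ := eventually_atBot.1 ((tendsto_cdf_atBot μ).eventually (gt_mem_nhds hβ))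
  rw [distFun_eq_cdf]
  exact ⟨a, fun x hx => le_of_not_ge fun hxa => (hx.trans_lt (ha x hxa)).false⟩

lemma setOf_le_distFun_nonempty (hβ : β < 1) : {x | β ≤ distFun μ x}.Nonempty := by
  rw [distFun_eq_cdf]
  exact ((tendsto_cdf_atTop μ).eventually (lt_mem_nhds hβ)).exists.imp fun _ h => h.le

lemma le_distFun_lowerQuantile (hβ : β ∈ Ioo 0 1) : β ≤ distFun μ (lowerQuantile μ β) := by
  have hright : Tendsto (cdf μ) (𝓝[>] (lowerQuantile μ β)) (𝓝 (cdf μ (lowerQuantile μ β))) :=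
    ((cdf μ).right_continuous _).mono Ioi_subset_Ici_self
  rw [distFun_eq_cdf]
  refine ge_of_tendsto hright (eventually_nhdsWithin_of_forall fun x hx => ?_)
  obtain ⟨y, hy, hyx⟩ := exists_lt_of_csInf_lt (setOf_le_distFun_nonempty hβ.2) hx
  exact (distFun_eq_cdf μ ▸ hy).trans (monotone_cdf μ hyx.le)

lemma lowerQuantile_le_iff_le_distFun (hβ : β ∈ Ioo 0 1) {x : ℝ} :
    lowerQuantile μ β ≤ x ↔ β ≤ distFun μ x := by
  refine ⟨fun h => (le_distFun_lowerQuantile (μ := μ) hβ).trans ?_,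
    fun h => csInf_le (bddBelow_setOf_le_distFun hβ.1) h⟩
  rw [distFun_eq_cdf]
  exact monotone_cdf μ h

lemma distFun_lt_of_lt_lowerQuantile (hβ : β ∈ Ioo 0 1) {x : ℝ} (hx : x < lowerQuantile μ β) :
    distFun μ x < β :=
  lt_of_not_ge fun h => hx.not_ge ((lowerQuantile_le_iff_le_distFun hβ).2 h)

lemma monotoneOn_lowerQuantile : MonotoneOn (lowerQuantile μ) (Ioo 0 1) :=
  fun _ hβ _ hγ hβγ => (lowerQuantile_le_iff_le_distFun hβ).2
    (hβγ.trans (le_distFun_lowerQuantile hγ))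

lemma distFun_lowerQuantile (hcont : Continuous (distFun μ)) (hβ : β ∈ Ioo 0 1) :
    distFun μ (lowerQuantile μ β) = β := by
  refine le_antisymm ?_ (le_distFun_lowerQuantile hβ)
  have hleft : Tendsto (distFun μ) (𝓝[<] (lowerQuantile μ β))
      (𝓝 (distFun μ (lowerQuantile μ β))) :=
    hcont.continuousAt.continuousWithinAt
  exact le_of_tendsto hleft
    (eventually_nhdsWithin_of_forall fun x hx => (distFun_lt_of_lt_lowerQuantile hβ hx).le)

lemma continuousAt_lowerQuantile (hmono : StrictMono (distFun μ)) (hβ : β ∈ Ioo 0 1) :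
    ContinuousAt (lowerQuantile μ) β := by
  refine tendsto_order.2 ⟨fun a ha => ?_, fun b hb => ?_⟩
  · have hFa := distFun_lt_of_lt_lowerQuantile hβ ha
    filter_upwards [Ioi_mem_nhds hFa, Ioo_mem_nhds hβ.1 hβ.2] with γ hγ hγ01
    exact lt_of_not_ge fun h => (lowerQuantile_le_iff_le_distFun hγ01).1 h |>.not_gt hγ
  · obtain ⟨b', hqb', hb'b⟩ := exists_between hb
    have hFb' : β < distFun μ b' := (le_distFun_lowerQuantile hβ).trans_lt (hmono hqb')
    filter_upwards [Iio_mem_nhds hFb', Ioo_mem_nhds hβ.1 hβ.2] with γ hγ hγ01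
    exact ((lowerQuantile_le_iff_le_distFun hγ01).2 (le_of_lt hγ)).trans_lt hb'b

lemma hasDerivAt_lowerQuantile (hcont : Continuous (distFun μ)) (hmono : StrictMono (distFun μ))
    (hβ : β ∈ Ioo 0 1) {f : ℝ} (hF : HasDerivAt (distFun μ) f (lowerQuantile μ β))
    (hf : f ≠ 0) : HasDerivAt (lowerQuantile μ) f⁻¹ β :=
  hF.of_local_left_inverse (continuousAt_lowerQuantile hmono hβ) hf <| by
    filter_upwards [Ioo_mem_nhds hβ.1 hβ.2] with γ hγ using distFun_lowerQuantile hcont hγ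

end ProbabilityMeasure

namespace StieltjesFunction

noncomputable def clampedShift (F : StieltjesFunction ℝ) {ε : ℝ} (hε : 0 ≤ ε) (c : ℝ) :
    StieltjesFunction ℝ where
  toFun x := projIcc 0 1 zero_le_one (if x < c then F x - ε else F x + ε)
  mono' := by
    intro x y hxy
    refine Subtype.mono_coe _ (monotone_projIcc zero_le_one ?_)
    have hF := F.mono hxy
    split_ifs <;> linarith
  right_continuous' x := by
    have hshift (δ : ℝ) :
        ContinuousWithinAt (fun t => (projIcc (0 : ℝ) 1 zero_le_one (F t + δ) : ℝ)) (Ici x) x :=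
      (continuous_subtype_val.comp continuous_projIcc).continuousAt.comp_continuousWithinAt
        ((F.right_continuous x).add continuousWithinAt_const)
    by_cases hx : x < c
    · refine (hshift (-ε)).congr_of_eventuallyEq ?_ (by simp [hx, sub_eq_add_neg])
      filter_upwards [Ico_mem_nhdsGE hx] with t ht
      simp [ht.2, sub_eq_add_neg]
    · refine (hshift ε).congr_of_eventuallyEq ?_ (by simp [hx])
      filter_upwards [self_mem_nhdsWithin] with t (ht : x ≤ t)
      simp [not_lt.2 ((not_lt.1 hx).trans ht)]

variable {F : StieltjesFunction ℝ} {ε : ℝ} (hε : 0 ≤ ε) {c : ℝ}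

lemma clampedShift_of_lt {x : ℝ} (hx : x < c) :
    F.clampedShift hε c x = projIcc 0 1 zero_le_one (F x - ε) := by
  simp [clampedShift, hx]

lemma clampedShift_of_le {x : ℝ} (hx : c ≤ x) :
    F.clampedShift hε c x = projIcc 0 1 zero_le_one (F x + ε) := by
  simp [clampedShift, not_lt.2 hx]

lemma abs_clampedShift_sub_le {x : ℝ} (hx : F x ∈ Icc 0 1) : |F.clampedShift hε c x - F x| ≤ ε := by
  have hclamp := Set.abs_projIcc_sub_projIcc (h := zero_le_one) (c := F x - ε) (d := F x)
  have hclamp' := Set.abs_projIcc_sub_projIcc (h := zero_le_one) (c := F x + ε) (d := F x)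
  rw [projIcc_of_mem _ hx] at hclamp hclamp'
  by_cases hxc : x < c
  · rw [clampedShift_of_lt hε hxc]
    simpa [abs_of_nonneg hε] using hclamp
  · rw [clampedShift_of_le hε (not_lt.1 hxc)]
    simpa [abs_of_nonneg hε] using hclamp'

lemma tendsto_clampedShift_atBot (hF : Tendsto F atBot (𝓝 0)) :
    Tendsto (F.clampedShift hε c) atBot (𝓝 0) := by
  have hlim : Tendsto (fun x => (projIcc (0 : ℝ) 1 zero_le_one (F x - ε) : ℝ)) atBot
      (𝓝 (projIcc (0 : ℝ) 1 zero_le_one (0 - ε))) :=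
    ((continuous_subtype_val.comp continuous_projIcc).tendsto _).comp (hF.sub_const ε)
  rw [projIcc_of_le_left _ (by linarith)] at hlim
  refine hlim.congr' ?_
  filter_upwards [eventually_lt_atBot c] with x hx
  rw [clampedShift_of_lt hε hx]

lemma tendsto_clampedShift_atTop (hF : Tendsto F atTop (𝓝 1)) :
    Tendsto (F.clampedShift hε c) atTop (𝓝 1) := by
  have hlim : Tendsto (fun x => (projIcc (0 : ℝ) 1 zero_le_one (F x + ε) : ℝ)) atTop
      (𝓝 (projIcc (0 : ℝ) 1 zero_le_one (1 + ε))) :=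
    ((continuous_subtype_val.comp continuous_projIcc).tendsto _).comp (hF.add_const ε)
  rw [projIcc_of_right_le _ (by linarith)] at hlim
  refine hlim.congr' ?_
  filter_upwards [eventually_ge_atTop c] with x hx
  rw [clampedShift_of_le hε hx]

end StieltjesFunction

section KolmogorovBall

variable (μ₀ : Measure ℝ) [IsProbabilityMeasure μ₀] {α ε : ℝ}

lemma lowerQuantile_mem_Icc_of_mem_kolmogorovBall (hε : 0 ≤ ε) (hlo : 0 < α - ε) (hhi : α + ε < 1)
    {μ : Measure ℝ} (hμ : μ ∈ kolmogorovBall μ₀ ε) :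
    lowerQuantile μ α ∈ Icc (lowerQuantile μ₀ (α - ε)) (lowerQuantile μ₀ (α + ε)) := by
  obtain ⟨hprob, hdist⟩ := hμ
  have hα : α ∈ Ioo 0 1 := ⟨by linarith, by linarith⟩
  have hαε : α + ε ∈ Ioo 0 1 := ⟨by linarith, hhi⟩
  constructor
  · rw [lowerQuantile_le_iff_le_distFun ⟨hlo, by linarith⟩]
    linarith [le_distFun_lowerQuantile (μ := μ) hα, (abs_le.1 (hdist (lowerQuantile μ α))).2]
  · rw [lowerQuantile_le_iff_le_distFun hα]
    linarith [le_distFun_lowerQuantile (μ := μ₀) hαε,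
      (abs_le.1 (hdist (lowerQuantile μ₀ (α + ε)))).1]

lemma exists_mem_kolmogorovBall_lowerQuantile_eq (hε : 0 ≤ ε) (hlo : 0 < α - ε)
    (hhi : α + ε < 1) {c : ℝ}
    (hc : c ∈ Icc (lowerQuantile μ₀ (α - ε)) (lowerQuantile μ₀ (α + ε))) :
    ∃ μ ∈ kolmogorovBall μ₀ ε, lowerQuantile μ α = c := by
  have hbot : Tendsto ((cdf μ₀).clampedShift hε c) atBot (𝓝 0) :=
    StieltjesFunction.tendsto_clampedShift_atBot hε (tendsto_cdf_atBot μ₀)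
  have htop : Tendsto ((cdf μ₀).clampedShift hε c) atTop (𝓝 1) :=
    StieltjesFunction.tendsto_clampedShift_atTop hε (tendsto_cdf_atTop μ₀)
  set G := (cdf μ₀).clampedShift hε c
  have := G.isProbabilityMeasure hbot htop
  have hG : distFun G.measure = G := by
    rw [distFun_eq_cdf, cdf_measure_stieltjesFunction G hbot htop]
  refine ⟨G.measure, ⟨inferInstance, fun x => ?_⟩, lowerQuantile_eq_of_le_distFun_iff fun x => ?_⟩
  · rw [hG, distFun_eq_cdf]
    exact StieltjesFunction.abs_clampedShift_sub_le hε ⟨cdf_nonneg μ₀ x, cdf_le_one μ₀ x⟩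
  · rw [hG]
    by_cases hxc : x < c
    · have hFx : cdf μ₀ x < α + ε := distFun_eq_cdf μ₀ ▸
        distFun_lt_of_lt_lowerQuantile ⟨by linarith, hhi⟩ (hxc.trans_le hc.2)
      refine iff_of_false (fun h => ?_) (not_le.2 hxc)
      rw [StieltjesFunction.clampedShift_of_lt hε hxc, coe_projIcc] at h
      exact (max_lt (by linarith) (min_lt_of_right_lt (by linarith))).not_ge h
    · have hFx : α - ε ≤ cdf μ₀ x := distFun_eq_cdf μ₀ ▸
        (lowerQuantile_le_iff_le_distFun ⟨hlo, by linarith⟩).1 (hc.1.trans (not_lt.1 hxc))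
      refine iff_of_true ?_ (not_lt.1 hxc)
      rw [StieltjesFunction.clampedShift_of_le hε (not_lt.1 hxc), coe_projIcc]
      exact le_max_of_le_right (le_min (by linarith) (by linarith))

lemma lowerQuantile_image_kolmogorovBall (hε : 0 ≤ ε) (hlo : 0 < α - ε) (hhi : α + ε < 1) :
    (lowerQuantile · α) '' kolmogorovBall μ₀ ε =
      Icc (lowerQuantile μ₀ (α - ε)) (lowerQuantile μ₀ (α + ε)) := by
  refine Subset.antisymm ?_ fun c hc => ?_
  · rintro _ ⟨μ, hμ, rfl⟩
    exact lowerQuantile_mem_Icc_of_mem_kolmogorovBall μ₀ hε hlo hhi hμ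
  · exact exists_mem_kolmogorovBall_lowerQuantile_eq μ₀ hε hlo hhi hc

lemma VaR_image_kolmogorovBall (hε : 0 ≤ ε) (hlo : 0 < α - ε) (hhi : α + ε < 1) :
    (VaR · α) '' kolmogorovBall μ₀ ε =
      Icc (-lowerQuantile μ₀ (α + ε)) (-lowerQuantile μ₀ (α - ε)) := by
  change (Neg.neg ∘ (lowerQuantile · α)) '' _ = _
  rw [image_comp, lowerQuantile_image_kolmogorovBall μ₀ hε hlo hhi, image_neg_eq_neg, neg_Icc]

end KolmogorovBall

theorem HasDerivAt.tendsto_backwardDiff_div_centralDiff {f : ℝ → ℝ} {d a : ℝ}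
    (hf : HasDerivAt f d a) (hd : d ≠ 0) :
    Tendsto (fun ε => (f a - f (a - ε)) / (f (a + ε) - f (a - ε))) (𝓝[>] 0) (𝓝 (1 / 2)) := by
  have hforward : Tendsto (fun ε => (f (a + ε) - f a) / ε) (𝓝[>] 0) (𝓝 d) := by
    simpa [div_eq_inv_mul] using hf.tendsto_slope_zero_right
  have hbackward : Tendsto (fun ε => (f a - f (a - ε)) / ε) (𝓝[>] 0) (𝓝 d) := by
    have hneg : Tendsto (fun ε : ℝ => -ε) (𝓝[>] 0) (𝓝[<] 0) := by
      simpa using tendsto_neg_nhdsGT (a := (0 : ℝ))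
    refine (hf.tendsto_slope_zero_left.comp hneg).congr fun ε => ?_
    simp only [Function.comp_apply, smul_eq_mul, ← sub_eq_add_neg]
    rw [inv_neg, neg_mul, ← mul_neg, neg_sub, div_eq_inv_mul]
  have hratio := hbackward.div (hbackward.add hforward) (by simpa [← two_mul] using hd)
  rw [show d / (d + d) = 1 / 2 by field_simp; ring] at hratio
  refine hratio.congr' (eventually_nhdsWithin_of_forall fun ε (hε : 0 < ε) => ?_)
  simp only [Pi.div_apply]
  rw [← add_div, div_div_div_cancel_right₀ hε.ne']
  congr 1
  ring

/-- For the Kolmogorov `ε`-balls `𝓛_ε` around a reference measure `μ₀` whose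
distribution function `F₀` is continuous and strictly increasing, the extremal
Values-at-Risk are `sup = −F₀⁻¹(α−ε)` and `inf = −F₀⁻¹(α+ε)` for
`0 < ε < min(α, 1−α)`; consequently, if moreover `F₀` has a density `f₀`
continuous and positive at `F₀⁻¹(α)`, the local measure of model risk for
`VaR_α` equals `1/2`. -/
theorem local_measure_kolmogorov_ball (μ₀ : Measure ℝ) [IsProbabilityMeasure μ₀]
    (hcont : Continuous (distFun μ₀)) (hmono : StrictMono (distFun μ₀))
    (α : ℝ) (hα : α ∈ Ioo (0 : ℝ) 1)
    (Lset : ℝ → Set (Measure ℝ))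
    (hLset : ∀ ε : ℝ, Lset ε =
      {μ | IsProbabilityMeasure μ ∧ ∀ x : ℝ, |distFun μ x - distFun μ₀ x| ≤ ε}) :
    (∀ ε : ℝ, 0 < ε → ε < min α (1 - α) →
      sSup ((fun μ : Measure ℝ => VaR μ α) '' Lset ε) = - lowerQuantile μ₀ (α - ε) ∧
      sInf ((fun μ : Measure ℝ => VaR μ α) '' Lset ε) = - lowerQuantile μ₀ (α + ε)) ∧
    (∀ f₀ : ℝ → ℝ, (∀ x, HasDerivAt (distFun μ₀) (f₀ x) x) →
      ContinuousAt f₀ (lowerQuantile μ₀ α) → 0 < f₀ (lowerQuantile μ₀ α) →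
      Tendsto (fun ε : ℝ =>
          (sSup ((fun μ : Measure ℝ => VaR μ α) '' Lset ε) - VaR μ₀ α) /
          (sSup ((fun μ : Measure ℝ => VaR μ α) '' Lset ε) -
            sInf ((fun μ : Measure ℝ => VaR μ α) '' Lset ε)))
        (nhdsWithin 0 (Ioi 0)) (nhds (1 / 2))) := by
  obtain rfl : Lset = kolmogorovBall μ₀ := funext hLset
  have hextremes : ∀ ε : ℝ, 0 < ε → ε < min α (1 - α) →
      sSup ((VaR · α) '' kolmogorovBall μ₀ ε) = -lowerQuantile μ₀ (α - ε) ∧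
      sInf ((VaR · α) '' kolmogorovBall μ₀ ε) = -lowerQuantile μ₀ (α + ε) := by
    intro ε hε hεα
    have hlo : 0 < α - ε := by linarith [min_le_left α (1 - α)]
    have hhi : α + ε < 1 := by linarith [min_le_right α (1 - α)]
    have hle : -lowerQuantile μ₀ (α + ε) ≤ -lowerQuantile μ₀ (α - ε) :=
      neg_le_neg (monotoneOn_lowerQuantile ⟨hlo, by linarith⟩ ⟨by linarith, hhi⟩ (by linarith))
    rw [VaR_image_kolmogorovBall μ₀ hε.le hlo hhi, csSup_Icc hle, csInf_Icc hle]
    exact ⟨rfl, rfl⟩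
  refine ⟨hextremes, fun f₀ hderiv _ hpos => ?_⟩
  have hq := hasDerivAt_lowerQuantile hcont hmono hα (hderiv _) hpos.ne'
  refine (hq.tendsto_backwardDiff_div_centralDiff (inv_ne_zero hpos.ne')).congr' ?_
  filter_upwards [Ioo_mem_nhdsGT (lt_min hα.1 (sub_pos.2 hα.2))] with ε ⟨hε, hεα⟩
  rw [(hextremes ε hε hεα).1, (hextremes ε hε hεα).2, VaR]
  congr 1 <;> ring
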